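/- arXiv:2012.10687 — 8 statements merged into one kernel-verified Lean document; each statement's English description precedes it below -/
import Mathlib

section
/- Let S be an M×N real matrix and suppose that for each metabolite m there is a prescribed set C(m) ⊆ {1,...,N} of 'child' reactions, and that R is an N×M matrix with R_{jm} = 0 unless j ∈ C(m), the nonzero entries R_{jm} = r_{jm} being algebraically independent indeterminates. Then det(SR), viewed as a polynomial in the r_{jm}, equals Σ_J det(S^J) · Π_m r_{J(m),m}, where the sum ranges over all injective maps J : {1,...,M} → {1,...,N} with J(m) ∈ C(m) for all m (Child Selections), and S^J is the M×M matrix whose m-th column is column J(m) of S. -/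
open scoped Classical

/-! Expanding `det (S R)` by multilinearity in the columns of `R` gives a sum over all maps
`r : M → N` of `det (S^r) · ∏ₘ R (r m) m`. The term of `r` vanishes when `r` is not injective
(two equal columns of `S^r`) and when some `r m ∉ C m` (a zero factor `R (r m) m`); what is left
is exactly the sum over Child Selections, where `R (J m) m` is the indeterminate `r_{J(m),m}`. -/

namespace Matrix

variable {m n α : Type*} [Fintype m] [DecidableEq m] [CommRing α]

theorem det_submatrix_id_eq_zero_of_not_injective (A : Matrix m n α) {r : m → n}
    (hr : ¬ Function.Injective r) : (A.submatrix id r).det = 0 := by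
  obtain ⟨i, j, hij, hne⟩ := Function.not_injective_iff.mp hr
  exact det_zero_of_column_eq hne fun k => by simp [hij]

variable [Fintype n]

theorem det_mul_eq_sum_prod_mul_det_submatrix (A : Matrix m n α) (B : Matrix n m α) :
    (A * B).det = ∑ r : m → n, (∏ i, A i (r i)) * (B.submatrix r id).det := by
  have hrows : A * B = of fun i => ∑ j, A i j • B j := by
    ext i k
    simp [mul_apply]
  rw [hrows]
  calc detRowAlternating (fun i => ∑ j, A i j • B j)
      = ∑ r : m → n, detRowAlternating (fun i => A i (r i) • B (r i)) :=
        detRowAlternating.toMultilinearMap.map_sum fun i j => A i j • B j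
    _ = ∑ r : m → n, (∏ i, A i (r i)) * (B.submatrix r id).det := by
        refine Finset.sum_congr rfl fun r _ => ?_
        exact (detRowAlternating.toMultilinearMap.map_smul_univ _ _).trans (smul_eq_mul _ _)

theorem det_mul_eq_sum_det_submatrix_mul_prod (A : Matrix m n α) (B : Matrix n m α) :
    (A * B).det = ∑ r : m → n, (A.submatrix id r).det * ∏ i, B (r i) i := by
  rw [← det_transpose, transpose_mul, det_mul_eq_sum_prod_mul_det_submatrix]
  refine Finset.sum_congr rfl fun r _ => ?_
  rw [mul_comm, ← transpose_submatrix, det_transpose]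
  rfl

end Matrix

/-- Child Selection expansion of the Jacobian determinant:
det(SR) = Σ_J det(S^J) · Π_m r_{J(m),m}, where the r_{jm} are indeterminates
supported on the child pairs and J ranges over Child Selections. -/
theorem stmt2 (M N : ℕ) (S : Matrix (Fin M) (Fin N) ℝ)
    (C : Fin M → Finset (Fin N))
    (R : Matrix (Fin N) (Fin M) (MvPolynomial (Fin N × Fin M) ℝ))
    (hR : ∀ j m, R j m = if j ∈ C m then MvPolynomial.X (j, m) else 0) :
    (S.map MvPolynomial.C * R).det =
      ∑ J : {J : Fin M → Fin N // Function.Injective J ∧ ∀ m, J m ∈ C m},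
        MvPolynomial.C (S.submatrix id J.1).det *
          ∏ m : Fin M, MvPolynomial.X (J.1 m, m) := by
  set term : (Fin M → Fin N) → MvPolynomial (Fin N × Fin M) ℝ :=
    fun r => MvPolynomial.C (S.submatrix id r).det * ∏ m, R (r m) m
  -- The product above elaborates through `CStarMatrix`'s `HMul` instance, so the expansion is
  -- applied up to defeq rather than by rewriting.
  have hexpand : (S.map MvPolynomial.C * R).det = ∑ r, term r := by
    refine (Matrix.det_mul_eq_sum_det_submatrix_mul_prod (S.map MvPolynomial.C) R).trans ?_
    refine Finset.sum_congr rfl fun r _ => ?_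
    rw [Matrix.submatrix_map, ← RingHom.mapMatrix_apply, ← RingHom.map_det]
  have hsupport : ∀ r ∈ Finset.univ, term r ≠ 0 → Function.Injective r ∧ ∀ m, r m ∈ C m := by
    intro r _ hr
    refine ⟨by_contra fun hinj => hr ?_, fun m => by_contra fun hm => hr ?_⟩
    · simp only [term, Matrix.det_submatrix_id_eq_zero_of_not_injective S hinj, map_zero,
        zero_mul]
    · exact mul_eq_zero_of_right _ (Finset.prod_eq_zero (Finset.mem_univ m) (by simp [hR, hm]))
  rw [hexpand, ← Finset.sum_filter_of_ne hsupport,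
    Finset.sum_subtype _ fun r => Finset.mem_filter_univ r]
  refine Finset.sum_congr rfl fun J _ => ?_
  simp only [term, hR, J.2.2, if_true]
end

section
/- Let S be M×N, R be N×M with symbolic entries r_{jm} supported on input pairs, and assume det(SR) ≠ 0 as a polynomial. For metabolites m* and m', the (m',m*) entry of (SR)⁻¹ multiplied by det(SR) equals (-1)^{m*+m'} det((SR) with row m* and column m' deleted); consequently det(SR)·(δx)^{m*}_{m'} = -Σ_{J^{∨m'}} det(S^{J^{∨m'} ∪ e_{m*}}) · Π_{m≠m'} r_{J^{∨m'}(m),m}, where the sum runs over all Partial Child Selections J^{∨m'} (injective maps from M∖{m'} to reactions assigning each metabolite an outgoing reaction), and S^{J^{∨m'} ∪ e_{m*}} is the M×M matrix whose m'-th column is the standard basis vector e_{m*} and whose other columns are the stoichiometric columns selected by J^{∨m'}. -/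
open scoped Classical

noncomputable abbrev RatFunField (σ : Type) := FractionRing (MvPolynomial σ ℝ)

/-!
By Cramer's rule, `det A * (A⁻¹) m' m*` is the adjugate entry, i.e. the determinant of `A` with
column `m'` replaced by `e_{m*}`. Laplace expansion along that column gives the signed minor. For
the expansion in Partial Child Selections, write every other column `m` of `A = S R` as
`∑_{j ∈ C m} r (j, m) • S_j` and expand the determinant multilinearly in those columns: a choice
`J` of one reaction per column contributes `det(S^{J ∪ e_{m*}}) * ∏ r (J m, m)`, and choices that
are not injective contribute nothing, since two columns of `S^{J ∪ e_{m*}}` then coincide.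
-/

open Finset Function

namespace Matrix

variable {n κ R : Type*} [Fintype n] [DecidableEq n] [CommRing R]

theorem det_mul_inv_apply {A : Matrix n n R} (h : IsUnit A.det) (i j : n) :
    A.det * A⁻¹ i j = A.adjugate i j := by
  rw [inv_def, smul_apply, smul_eq_mul, ← mul_assoc, Ring.mul_inverse_cancel _ h, one_mul]

theorem adjugate_apply_eq_det_updateCol (A : Matrix n n R) (i j : n) :
    A.adjugate i j = (A.updateCol i (Pi.single j 1)).det := by
  rw [← transpose_apply A.adjugate, adjugate_transpose, adjugate_apply,
    updateRow_transpose, det_transpose]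

variable (k : n) (e : n → R) (w : κ → n → R)

theorem det_of_dite_eq_zero_of_not_injective {J : {m // m ≠ k} → κ} (hJ : ¬Injective J) :
    (of fun i m => if h : m = k then e i else w (J ⟨m, h⟩) i).det = 0 := by
  obtain ⟨m₁, m₂, heq, hne⟩ : ∃ m₁ m₂, J m₁ = J m₂ ∧ m₁ ≠ m₂ := by
    simpa [Injective] using hJ
  refine det_zero_of_column_eq (Subtype.coe_ne_coe.mpr hne) fun i => ?_
  simp only [of_apply, dif_neg m₁.2, dif_neg m₂.2, heq]

theorem det_of_dite_sum_eq_sum_piFinset [DecidableEq κ] (s : {m // m ≠ k} → Finset κ)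
    (c : {m // m ≠ k} → κ → R) :
    (of fun i m => if h : m = k then e i else ∑ j ∈ s ⟨m, h⟩, c ⟨m, h⟩ j * w j i).det =
      ∑ J ∈ Fintype.piFinset s,
        (of fun i m => if h : m = k then e i else w (J ⟨m, h⟩) i).det * ∏ m, c m (J m) := by
  set f := detRowAlternating.toMultilinearMap.domDomRestrict (· ≠ k) fun _ => e
  have hf : ∀ v : {m // m ≠ k} → n → R,
      f v = (of fun i m => if h : m = k then e i else v ⟨m, h⟩ i).det := by
    intro v
    change det (of fun j => if h : j ≠ k then v ⟨j, h⟩ else e) = _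
    rw [← det_transpose (of _)]
    congr 1
    ext a b
    by_cases h : b = k <;> simp [h]
  calc _ = f fun m => ∑ j ∈ s m, c m j • w j := by
        rw [hf]; simp only [Finset.sum_apply, Pi.smul_apply, smul_eq_mul]
    _ = ∑ J ∈ Fintype.piFinset s, f fun m => c m (J m) • w (J m) := f.map_sum_finset _ _
    _ = _ := sum_congr rfl fun J _ => by rw [f.map_smul_univ, hf, smul_eq_mul, mul_comm]

theorem det_of_dite_sum_eq_sum_injective [Fintype κ] [DecidableEq κ]
    (s : {m // m ≠ k} → Finset κ) (c : {m // m ≠ k} → κ → R) :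
    (of fun i m => if h : m = k then e i else ∑ j ∈ s ⟨m, h⟩, c ⟨m, h⟩ j * w j i).det =
      ∑ J : {J : {m // m ≠ k} → κ // Injective J ∧ ∀ m, J m ∈ s m},
        (of fun i m => if h : m = k then e i else w (J.1 ⟨m, h⟩) i).det * ∏ m, c m (J.1 m) := by
  rw [det_of_dite_sum_eq_sum_piFinset, ← sum_filter_of_ne (p := Injective), sum_subtype]
  · simp [and_comm]
  · intro J _ hJ
    by_contra hinj
    exact hJ (by rw [det_of_dite_eq_zero_of_not_injective k e w hinj, zero_mul])

end Matrix

open Matrix in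
theorem stmt4_general (M N : ℕ) (mstar m' : Fin (M + 1))
    (S : Matrix (Fin (M + 1)) (Fin N) ℝ)
    (C : Fin (M + 1) → Finset (Fin N))
    (ι : ℝ → RatFunField (Fin N × Fin (M + 1)))
    (hι : ∀ x, ι x = algebraMap (MvPolynomial (Fin N × Fin (M + 1)) ℝ) _ (MvPolynomial.C x))
    (r : Fin N × Fin (M + 1) → RatFunField (Fin N × Fin (M + 1)))
    (R : Matrix (Fin N) (Fin (M + 1)) (RatFunField (Fin N × Fin (M + 1))))
    (hR : ∀ j m, R j m = if j ∈ C m then r (j, m) else 0)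
    (A : Matrix (Fin (M + 1)) (Fin (M + 1)) (RatFunField (Fin N × Fin (M + 1))))
    (hA : A = HMul.hMul (S.map ι) R)
    (hdet : A.det ≠ 0) :
    A.det * A⁻¹ m' mstar =
        (-1) ^ ((mstar : ℕ) + (m' : ℕ)) * (A.submatrix mstar.succAbove m'.succAbove).det
    ∧ A.det * (-(A⁻¹ m' mstar)) =
        -∑ J : {J : {m : Fin (M + 1) // m ≠ m'} → Fin N //
              Function.Injective J ∧ ∀ m, J m ∈ C m.1},
            ι (Matrix.of (fun i m => if h : m = m' then (if i = mstar then (1 : ℝ) else 0)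
                else S i (J.1 ⟨m, h⟩))).det *
              ∏ m : {m : Fin (M + 1) // m ≠ m'}, r (J.1 m, m.1) := by
  obtain rfl : ι = algebraMap ℝ _ :=
    funext fun x => (hι x).trans (IsScalarTower.algebraMap_apply _ _ _ x).symm
  have hcramer := det_mul_inv_apply (isUnit_iff_ne_zero.mpr hdet) m' mstar
  refine ⟨by rw [hcramer, adjugate_fin_succ_eq_det_submatrix], ?_⟩
  have hcol : A.updateCol m' (Pi.single mstar 1) = of fun i m =>
      if h : m = m' then algebraMap ℝ _ (if i = mstar then 1 else 0)
      else ∑ j ∈ C m, r (j, m) * algebraMap ℝ _ (S i j) := by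
    ext i m
    by_cases h : m = m'
    · subst h; by_cases hi : i = mstar <;> simp [hi]
    · simp [h, hA, mul_apply, hR, mul_comm]
  rw [mul_neg, hcramer, adjugate_apply_eq_det_updateCol, hcol,
    det_of_dite_sum_eq_sum_injective m' _ (fun j i => algebraMap ℝ _ (S i j)) (fun m => C m)
      (fun m j => r (j, m))]
  refine congrArg _ (Fintype.sum_congr _ _ fun J => ?_)
  rw [RingHom.map_det]
  congr 2
  ext i m
  by_cases h : m = m' <;> simp [h]

/-- Cramer's rule for the metabolite response, and its Partial Child
Selection expansion: det(SR)·((SR)⁻¹)_{m',m*} = (-1)^{m*+m'}·det(minor), and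
det(SR)·(δx)^{m*}_{m'} = -Σ_{J^{∨m'}} det(S^{J^{∨m'} ∪ e_{m*}})·Π_{m≠m'} r_{J^{∨m'}(m),m}. -/
theorem stmt4 (M N : ℕ) (mstar m' : Fin (M + 1))
    (S : Matrix (Fin (M + 1)) (Fin N) ℝ)
    (C : Fin (M + 1) → Finset (Fin N))
    (ι : ℝ → RatFunField (Fin N × Fin (M + 1)))
    (hι : ∀ x, ι x = algebraMap (MvPolynomial (Fin N × Fin (M + 1)) ℝ) _ (MvPolynomial.C x))
    (r : Fin N × Fin (M + 1) → RatFunField (Fin N × Fin (M + 1)))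
    (hr : ∀ p, r p = algebraMap (MvPolynomial (Fin N × Fin (M + 1)) ℝ) _ (MvPolynomial.X p))
    (R : Matrix (Fin N) (Fin (M + 1)) (RatFunField (Fin N × Fin (M + 1))))
    (hR : ∀ j m, R j m = if j ∈ C m then r (j, m) else 0)
    (A : Matrix (Fin (M + 1)) (Fin (M + 1)) (RatFunField (Fin N × Fin (M + 1))))
    (hA : A = HMul.hMul (S.map ι) R)
    (hdet : A.det ≠ 0) :
    A.det * A⁻¹ m' mstar =
        (-1) ^ ((mstar : ℕ) + (m' : ℕ)) * (A.submatrix mstar.succAbove m'.succAbove).det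
    ∧ A.det * (-(A⁻¹ m' mstar)) =
        -∑ J : {J : {m : Fin (M + 1) // m ≠ m'} → Fin N //
              Function.Injective J ∧ ∀ m, J m ∈ C m.1},
            ι (Matrix.of (fun i m => if h : m = m' then (if i = mstar then (1 : ℝ) else 0)
                else S i (J.1 ⟨m, h⟩))).det *
              ∏ m : {m : Fin (M + 1) // m ≠ m'}, r (J.1 m, m.1) :=
  stmt4_general M N mstar m' S C ι hι r R hR A hA hdet
end

section
/- In the setting above, the response (δx)^{m*}_{m'} of metabolite m' to a perturbation of m* is algebraically nonzero (i.e., a nonzero rational function of the indeterminates r_{jm}) if and only if there exists a Partial Child Selection J^{∨m'} : M∖{m'} → E with det(S^{J^{∨m'} ∪ e_{m*}}) ≠ 0. -/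
/-!
By Cramer's rule, `(SR)⁻¹ m' m*` is a nonzero multiple of the determinant of `SR` with column `m'`
replaced by `e m*`. Every other column `m` of that matrix is `∑ j ∈ C m, r (j, m) • S·j`, so
multilinearity expands the determinant over selections `ρ` of one `j ∈ C m` per column, as
`∑ ρ, (∏ m, r (ρ m, m)) * det S^ρ`. Distinct selections give distinct monomials, hence the
determinant is a nonzero polynomial iff some `det S^ρ` is nonzero; such a selection is injective,
since a repeated column would make `det S^ρ` vanish.
-/

open scoped Classical

open Matrix

namespace Matrix

variable {n ι R : Type*} [Fintype n] [DecidableEq n]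

theorem det_of_sum_col [CommRing R] [DecidableEq ι] (s : n → Finset ι) (f : n → ι → n → R) :
    (of fun i m => ∑ j ∈ s m, f m j i).det =
      ∑ ρ ∈ Fintype.piFinset s, (of fun i m => f m (ρ m) i).det := by
  have hrows : (of fun i m => ∑ j ∈ s m, f m j i)ᵀ = fun m => ∑ j ∈ s m, f m j := by
    ext m i
    simp [Finset.sum_apply]
  rw [← det_transpose, hrows]
  exact (detRowAlternating.toMultilinearMap.map_sum_finset _ _).trans
    (Finset.sum_congr rfl fun ρ _ => (det_transpose _).symm)

theorem inv_apply_ne_zero_iff_det_updateCol_ne_zero [Field R] {A : Matrix n n R}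
    (hA : A.det ≠ 0) (i j : n) :
    A⁻¹ i j ≠ 0 ↔ (A.updateCol i (Pi.single j 1)).det ≠ 0 := by
  have hcramer : A⁻¹ i j = (A.det)⁻¹ * (A.updateCol i (Pi.single j 1)).det := by
    rw [← cramer_apply, cramer_eq_adjugate_mulVec, mulVec_single_one, inv_def,
      Ring.inverse_eq_inv, smul_apply, smul_eq_mul]
    rfl
  rw [hcramer, mul_ne_zero_iff, and_iff_right (inv_ne_zero hA)]

theorem exists_selection_det_updateCol_ne_zero_iff [CommRing R] [Nonempty ι] (s : n → Finset ι)
    (S : Matrix n ι R) (k : n) (b : n → R) :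
    (∃ ρ : n → ι, (∀ m, m ≠ k → ρ m ∈ s m) ∧ ((of fun i m => S i (ρ m)).updateCol k b).det ≠ 0) ↔
      ∃ J : {m // m ≠ k} → ι, Function.Injective J ∧ (∀ m, J m ∈ s m.1) ∧
        (of fun i m => if h : m = k then b i else S i (J ⟨m, h⟩)).det ≠ 0 := by
  have hcol : ∀ ρ : n → ι, (of fun i m => S i (ρ m)).updateCol k b =
      of fun i m => if h : m = k then b i else S i (ρ m) := by
    intro ρ
    ext i m
    by_cases hm : m = k <;> simp [hm]
  simp only [hcol]
  constructor
  · rintro ⟨ρ, hρ, hdet⟩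
    refine ⟨fun m => ρ m.1, fun m₁ m₂ hρm => ?_, fun m => hρ m.1 m.2, hdet⟩
    by_contra hne
    exact hdet (det_zero_of_column_eq (Subtype.coe_ne_coe.mpr hne) fun i => by
      simpa [m₁.2, m₂.2] using congrArg (S i) hρm)
  · rintro ⟨J, -, hJ, hdet⟩
    refine ⟨fun m => if h : m = k then Classical.arbitrary ι else J ⟨m, h⟩,
      fun m hm => by simpa [hm] using hJ ⟨m, hm⟩, ?_⟩
    convert hdet using 2
    ext i m
    by_cases hm : m = k <;> simp [hm]

end Matrix

namespace MvPolynomial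

theorem sum_monomial_ne_zero_iff {σ α R : Type*} [CommSemiring R] {t : Finset α}
    {e : α → σ →₀ ℕ} (he : Set.InjOn e t) (c : α → R) :
    ∑ x ∈ t, monomial (e x) (c x) ≠ 0 ↔ ∃ x ∈ t, c x ≠ 0 := by
  refine ⟨fun h => ?_, fun ⟨x, hx, hcx⟩ h => hcx ?_⟩
  · by_contra! hc
    exact h (Finset.sum_eq_zero fun x hx => by rw [hc x hx, monomial_zero])
  · have := congrArg (coeff (e x)) h
    rwa [coeff_zero, coeff_sum, Finset.sum_eq_single_of_mem x hx, coeff_monomial, if_pos rfl]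
      at this
    intro y hy hyx
    rw [coeff_monomial, if_neg fun hxy => hyx (he hy hx hxy)]

variable {n ι R : Type*} [Fintype n]

theorem sum_single_graph_apply [DecidableEq ι] (ρ : n → ι) (j : ι) (m : n) :
    (∑ k, Finsupp.single (ρ k, k) 1) (j, m) = if ρ m = j then 1 else 0 := by
  rw [Finsupp.finsetSum_apply, Finset.sum_eq_single m]
  · simp [Finsupp.single_apply]
  · intro k _ hk
    simp [Ne.symm hk]
  · simp

theorem sum_single_graph_injective [DecidableEq ι] :
    Function.Injective fun ρ : n → ι => ∑ m, Finsupp.single (ρ m, m) 1 := by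
  intro ρ ρ' h
  funext m
  have := congrArg (· (ρ m, m)) h
  simp only [sum_single_graph_apply] at this
  by_contra hne
  simp [Ne.symm hne] at this

variable [DecidableEq n] [CommRing R]

theorem det_of_X_mul_C (ρ : n → ι) (v : n → n → R) :
    (of fun i m => X (ρ m, m) * C (v i m) : Matrix n n (MvPolynomial (ι × n) R)).det =
      monomial (∑ m, Finsupp.single (ρ m, m) 1) (of v).det := calc
  _ = (∏ m, X (ρ m, m)) * ((of v).map C).det := det_mul_row _ _
  _ = _ := by
    rw [monomial_sum_index, mul_comm, ← RingHom.mapMatrix_apply, ← RingHom.map_det]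
    rfl

theorem det_of_sum_X_mul_C_ne_zero_iff [DecidableEq ι] (s : n → Finset ι)
    (v : n → ι → n → R) :
    (of fun i m => ∑ j ∈ s m, X (j, m) * C (v m j i) :
        Matrix n n (MvPolynomial (ι × n) R)).det ≠ 0 ↔
      ∃ ρ ∈ Fintype.piFinset s, (of fun i m => v m (ρ m) i).det ≠ 0 := by
  rw [det_of_sum_col]
  simp_rw [det_of_X_mul_C]
  exact sum_monomial_ne_zero_iff sum_single_graph_injective.injOn _

theorem det_updateCol_of_sum_X_mul_C_ne_zero_iff [DecidableEq ι] [Nonempty ι]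
    (s : n → Finset ι) (S : Matrix n ι R) (k : n) (b : n → R) :
    ((of fun i m => ∑ j ∈ s m, X (j, m) * C (S i j) :
        Matrix n n (MvPolynomial (ι × n) R)).updateCol k (fun i => C (b i))).det ≠ 0 ↔
      ∃ ρ : n → ι, (∀ m, m ≠ k → ρ m ∈ s m) ∧
        ((of fun i m => S i (ρ m)).updateCol k b).det ≠ 0 := by
  obtain ⟨j₀⟩ := ‹Nonempty ι›
  set Q : Matrix n n (MvPolynomial (ι × n) R) := of fun i m => ∑ j ∈ s m, X (j, m) * C (S i j)
  set v : n → ι → n → R := fun m j i => if m = k then b i else S i j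
  -- Weighting column `k` by the regular element `X (j₀, k)` brings the matrix to the shape of
  -- `det_of_sum_X_mul_C_ne_zero_iff`.
  have hweight : (of fun i m => ∑ j ∈ Function.update s k {j₀} m, X (j, m) * C (v m j i) :
      Matrix n n (MvPolynomial (ι × n) R)) =
        Q.updateCol k ((X (j₀, k) : MvPolynomial (ι × n) R) • fun i => C (b i)) := by
    ext i m
    by_cases hm : m = k
    · subst hm; simp [v]
    · simp [v, Q, hm]
  have hsel : ∀ ρ : n → ι,
      (of fun i m => v m (ρ m) i) = (of fun i m => S i (ρ m)).updateCol k b := by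
    intro ρ
    ext i m
    by_cases hm : m = k <;> simp [v, hm]
  rw [ne_eq, ← (isRegular_X (n := (j₀, k))).left.mul_left_eq_zero_iff, ← det_updateCol_smul,
    ← hweight, ← ne_eq, det_of_sum_X_mul_C_ne_zero_iff]
  simp only [hsel, Fintype.mem_piFinset]
  constructor
  · rintro ⟨ρ, hρ, hdet⟩
    exact ⟨ρ, fun m hm => by simpa [hm] using hρ m, hdet⟩
  · rintro ⟨ρ, hρ, hdet⟩
    refine ⟨Function.update ρ k j₀, fun m => ?_, ?_⟩
    · by_cases hm : m = k
      · subst hm; simp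
      · simpa [hm] using hρ m hm
    · have hcol : (of fun i m => S i (Function.update ρ k j₀ m)).updateCol k b =
          (of fun i m => S i (ρ m)).updateCol k b := by
        ext i m
        by_cases hm : m = k <;> simp [hm]
      rwa [hcol]

end MvPolynomial

/-- The response (δx)^{m*}_{m'} = -((SR)⁻¹)_{m',m*} is algebraically
nonzero iff there exists a Partial Child Selection J^{∨m'} with
det(S^{J^{∨m'} ∪ e_{m*}}) ≠ 0. -/
theorem stmt5 (M N : ℕ) (mstar m' : Fin M)
    (S : Matrix (Fin M) (Fin N) ℝ)
    (C : Fin M → Finset (Fin N))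
    (ι : ℝ → RatFunField (Fin N × Fin M))
    (hι : ∀ x, ι x = algebraMap (MvPolynomial (Fin N × Fin M) ℝ) _ (MvPolynomial.C x))
    (r : Fin N × Fin M → RatFunField (Fin N × Fin M))
    (hr : ∀ p, r p = algebraMap (MvPolynomial (Fin N × Fin M) ℝ) _ (MvPolynomial.X p))
    (R : Matrix (Fin N) (Fin M) (RatFunField (Fin N × Fin M)))
    (hR : ∀ j m, R j m = if j ∈ C m then r (j, m) else 0)
    (A : Matrix (Fin M) (Fin M) (RatFunField (Fin N × Fin M)))
    (hA : A = S.map ι * R)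
    (hdet : A.det ≠ 0) :
    -(A⁻¹ m' mstar) ≠ 0 ↔
      ∃ J : {m : Fin M // m ≠ m'} → Fin N,
        Function.Injective J ∧ (∀ m, J m ∈ C m.1) ∧
        (Matrix.of (fun i m => if h : m = m' then (if i = mstar then (1 : ℝ) else 0)
            else S i (J ⟨m, h⟩))).det ≠ 0 := by
  set φ := algebraMap (MvPolynomial (Fin N × Fin M) ℝ) (RatFunField (Fin N × Fin M))
  have : Nonempty (Fin N) := by
    by_contra hN
    rw [not_nonempty_iff] at hN
    have : Nonempty (Fin M) := ⟨m'⟩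
    have hzero : S.map ι * R = 0 := by
      ext i m
      simp [Matrix.mul_apply]
    exact hdet (by rw [hA, hzero, det_zero])
  have hA_poly : A.updateCol m' (Pi.single mstar 1) =
      ((of fun i m => ∑ j ∈ C m, MvPolynomial.X (j, m) * MvPolynomial.C (S i j)).updateCol m'
        (fun i => MvPolynomial.C (Pi.single mstar (1 : ℝ) i))).map φ := by
    ext i m
    by_cases hm : m = m'
    · subst hm
      simp [Pi.single_apply, apply_ite φ]
    · simp [hA, mul_apply, hR, hι, hr, hm, mul_comm]
  rw [neg_ne_zero, inv_apply_ne_zero_iff_det_updateCol_ne_zero hdet, hA_poly,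
    ← RingHom.mapMatrix_apply, ← RingHom.map_det, map_ne_zero_iff φ (IsFractionRing.injective _ _),
    MvPolynomial.det_updateCol_of_sum_X_mul_C_ne_zero_iff,
    exists_selection_det_updateCol_ne_zero_iff]
  simp only [Pi.single_apply]
end

section
/- Let S, R be as above with det(SR) ≠ 0 algebraically, and let Φ^{m*} = -R (SR)^{-1} e_{m*} be the flux response vector. Then det(SR)·Φ^{m*}_{j'} = -Σ_{J ∋ j'} det(S^{J∖j' ∪ e_{m*}}) · Π_{m} r_{J(m),m}, where the sum runs over Child Selections J whose image contains j', and S^{J∖j' ∪ e_{m*}} is S^J with the column S^{j'} replaced by the standard basis vector e_{m*}. -/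
open scoped Classical

/-!
By Cramer's rule, `det A · (R A⁻¹)_{j' m*}` is the determinant of `A = S R` with row `m*`
replaced by row `j'` of `R`, and that matrix is `S' R`, where `S'` is `S` with row `m*`
replaced by `e_{j'}ᵀ`. Expanding `det (S' R)` multilinearly in the columns gives
`∑_J (∏_m R_{J m, m}) det S'^J`. A term vanishes unless `J` selects an allowed reaction for
every metabolite, is injective (otherwise `S'^J` has two equal columns) and hits `j'`
(otherwise row `m*` of `S'^J` is zero). For such `J`, with `J m₀ = j'`, the row `m*` of `S'^J`
is `e_{m₀}ᵀ`, so `det S'^J` is a cofactor of `S^J`, which is also the determinant of `S^J` with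
column `m₀` replaced by `e_{m*}`.
-/

open Function

namespace Matrix

variable {m n R : Type*} [Fintype m] [DecidableEq m] [CommRing R]

theorem det_mul_vecMul_inv_apply {A : Matrix m m R} (h : IsUnit A.det) (v : m → R) (i : m) :
    A.det * (v ᵥ* A⁻¹) i = (A.updateRow i v).det := by
  rw [← smul_eq_mul, ← Pi.smul_apply, det_smul_inv_vecMul_eq_cramer_transpose A v h,
    cramer_apply, updateCol_transpose, det_transpose]

theorem det_updateRow_single_eq_det_updateCol_single (A : Matrix m m R) (i k : m) :
    (A.updateRow i (Pi.single k 1)).det = (A.updateCol k (Pi.single i 1)).det := by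
  rw [← adjugate_apply, ← det_transpose (A.updateCol k _), ← updateRow_transpose,
    ← adjugate_apply, ← adjugate_transpose, transpose_apply]

theorem det_mul_eq_sum_det_submatrix [Fintype n] (B : Matrix m n R) (C : Matrix n m R) :
    (B * C).det = ∑ J : m → n, (∏ k, C (J k) k) * (B.submatrix id J).det := by
  let D := (detRowAlternating : (m → R) [⋀^m]→ₗ[R] R).toMultilinearMap
  have hcols : (B * C)ᵀ = fun k => ∑ j, C j k • Bᵀ j := by
    ext k i
    simp [mul_apply, mul_comm]
  calc (B * C).det = D fun k => ∑ j, C j k • Bᵀ j := by rw [← det_transpose, hcols]; rfl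
    _ = ∑ J : m → n, D fun k => C (J k) k • Bᵀ (J k) := D.map_sum _
    _ = _ := Finset.sum_congr rfl fun J _ => by
      rw [D.map_smul_univ, smul_eq_mul, ← det_transpose (B.submatrix id J)]
      rfl

theorem det_submatrix_eq_zero_of_not_injective (B : Matrix m n R) {J : m → n}
    (hJ : ¬Injective J) : (B.submatrix id J).det = 0 := by
  obtain ⟨k, l, hkl, hne⟩ := not_injective_iff.1 hJ
  exact det_zero_of_column_eq hne fun a => by simp [hkl]

theorem det_submatrix_updateRow_single_eq_zero [DecidableEq n] (B : Matrix m n R) (i : m)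
    {j : n} {J : m → n} (hj : j ∉ Set.range J) :
    ((B.updateRow i (Pi.single j 1)).submatrix id J).det = 0 :=
  det_eq_zero_of_row_eq_zero i fun k => by
    have : J k ≠ j := fun h => hj ⟨k, h⟩
    simp [this]

theorem det_submatrix_updateRow_single [DecidableEq n] (B : Matrix m n R) (i : m) {j : n}
    {J : m → n} (hJ : Injective J) (hj : j ∈ Set.range J) :
    ((B.updateRow i (Pi.single j 1)).submatrix id J).det =
      (of fun a l => if J l = j then (if a = i then 1 else 0) else B a (J l)).det := by
  obtain ⟨k, rfl⟩ := hj
  have hrow : (B.updateRow i (Pi.single (J k) 1)).submatrix id J =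
      (B.submatrix id J).updateRow i (Pi.single k 1) := by
    ext a l
    simp [updateRow_apply, Pi.single_apply, hJ.eq_iff]
  rw [hrow, det_updateRow_single_eq_det_updateCol_single]
  congr 1
  ext a l
  simp [updateCol_apply, Pi.single_apply, hJ.eq_iff]

end Matrix

open Matrix

theorem stmt6_general (M N : ℕ) (mstar : Fin M) (j' : Fin N)
    (S : Matrix (Fin M) (Fin N) ℝ)
    (C : Fin M → Finset (Fin N))
    (ι : ℝ → RatFunField (Fin N × Fin M))
    (hι : ∀ x, ι x = algebraMap (MvPolynomial (Fin N × Fin M) ℝ) _ (MvPolynomial.C x))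
    (r : Fin N × Fin M → RatFunField (Fin N × Fin M))
    (R : Matrix (Fin N) (Fin M) (RatFunField (Fin N × Fin M)))
    (hR : ∀ j m, R j m = if j ∈ C m then r (j, m) else 0)
    (A : Matrix (Fin M) (Fin M) (RatFunField (Fin N × Fin M)))
    (hA : A = S.map ι * R)
    (hdet : A.det ≠ 0)
    (Φ : Fin N → RatFunField (Fin N × Fin M))
    (hΦ : ∀ j, Φ j = -((R * A⁻¹) j mstar)) :
    A.det * Φ j' =
      -∑ J : {J : Fin M → Fin N //
            Function.Injective J ∧ (∀ m, J m ∈ C m) ∧ j' ∈ Set.range J},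
          ι (Matrix.of (fun i m => if J.1 m = j' then (if i = mstar then (1 : ℝ) else 0)
              else S i (J.1 m))).det *
            ∏ m : Fin M, r (J.1 m, m) := by
  set φ : ℝ →+* RatFunField (Fin N × Fin M) :=
    (algebraMap (MvPolynomial (Fin N × Fin M) ℝ) _).comp MvPolynomial.C
  have hιφ : ι = φ := funext hι
  set S' := S.updateRow mstar (Pi.single j' 1)
  have hrow : A.updateRow mstar (R j') = S'.map φ * R := by
    have hsingle : φ ∘ Pi.single j' 1 = Pi.single j' 1 := by
      ext j
      simp [Pi.single_apply, apply_ite φ]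
    rw [map_updateRow, updateRow_mul, hsingle, single_one_vecMul, hA, hιφ]
    rfl
  have hsupp : ∀ J, (∏ k, R (J k) k) * φ (S'.submatrix id J).det ≠ 0 →
      Function.Injective J ∧ (∀ m, J m ∈ C m) ∧ j' ∈ Set.range J := by
    intro J hJ
    refine ⟨?_, fun k => ?_, ?_⟩ <;> by_contra h <;> apply hJ
    · rw [det_submatrix_eq_zero_of_not_injective _ h, map_zero, mul_zero]
    · rw [Finset.prod_eq_zero (Finset.mem_univ k) (by simp [hR, h]), zero_mul]
    · rw [det_submatrix_updateRow_single_eq_zero _ _ h, map_zero, mul_zero]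
  calc A.det * Φ j' = -(A.updateRow mstar (R j')).det := by
        rw [hΦ, mul_neg, ← det_mul_vecMul_inv_apply (isUnit_iff_ne_zero.2 hdet)]
        rfl
    _ = -∑ J, (∏ k, R (J k) k) * φ (S'.submatrix id J).det := by
        simp [hrow, det_mul_eq_sum_det_submatrix, submatrix_map, RingHom.map_det]
    _ = _ := by
        rw [← Finset.sum_filter_of_ne fun J _ => hsupp J,
          Finset.sum_subtype _ fun J => Finset.mem_filter_univ J]
        refine congrArg _ (Finset.sum_congr rfl fun ⟨J, hinj, hC, hj⟩ _ => ?_)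
        rw [det_submatrix_updateRow_single S mstar hinj hj, hιφ, mul_comm]
        exact congrArg _ (Finset.prod_congr rfl fun k _ => by simp [hR, hC k])

/-- Child Selection expansion of the flux response to a metabolite
perturbation: det(SR)·Φ^{m*}_{j'} = -Σ_{J ∋ j'} det(S^{J∖j' ∪ e_{m*}})·Π_m r_{J(m),m}. -/
theorem stmt6 (M N : ℕ) (mstar : Fin M) (j' : Fin N)
    (S : Matrix (Fin M) (Fin N) ℝ)
    (C : Fin M → Finset (Fin N))
    (ι : ℝ → RatFunField (Fin N × Fin M))
    (hι : ∀ x, ι x = algebraMap (MvPolynomial (Fin N × Fin M) ℝ) _ (MvPolynomial.C x))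
    (r : Fin N × Fin M → RatFunField (Fin N × Fin M))
    (hr : ∀ p, r p = algebraMap (MvPolynomial (Fin N × Fin M) ℝ) _ (MvPolynomial.X p))
    (R : Matrix (Fin N) (Fin M) (RatFunField (Fin N × Fin M)))
    (hR : ∀ j m, R j m = if j ∈ C m then r (j, m) else 0)
    (A : Matrix (Fin M) (Fin M) (RatFunField (Fin N × Fin M)))
    (hA : A = S.map ι * R)
    (hdet : A.det ≠ 0)
    (Φ : Fin N → RatFunField (Fin N × Fin M))
    (hΦ : ∀ j, Φ j = -((R * A⁻¹) j mstar)) :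
    A.det * Φ j' =
      -∑ J : {J : Fin M → Fin N //
            Function.Injective J ∧ (∀ m, J m ∈ C m) ∧ j' ∈ Set.range J},
          ι (Matrix.of (fun i m => if J.1 m = j' then (if i = mstar then (1 : ℝ) else 0)
              else S i (J.1 m))).det *
            ∏ m : Fin M, r (J.1 m, m) :=
  stmt6_general M N mstar j' S C ι hι r R hR A hA hdet Φ hΦ
end

section
/- There exists a nondegenerate metabolic network in which a metabolite has zero algebraic self-influence: for the 5-metabolite, 7-reaction network with stoichiometric matrix S having columns f_A = e_A, f_C = e_C, S¹ = (-1,1,0,0,0)ᵀ, S² = (-1,-1,-1,1,0)ᵀ, S³ = (0,-1,-1,0,1)ᵀ, S⁴ = (0,0,0,-1,0)ᵀ, S⁵ = (0,0,0,0,-1)ᵀ over rows (A,B,C,D,E), det(SR) ≠ 0 algebraically, yet for every Partial Child Selection J^{∨A} the matrix S^{J^{∨A} ∪ e_A} is singular, hence (δx)^{A}_{A} ≡ 0: the concentration of A does not respond to a targeted perturbation of A. -/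
open scoped Classical

/-- Stoichiometric matrix of the self-influence counterexample: rows A,B,C,D,E =
0..4; columns f_A, f_C, 1, 2, 3, 4, 5 = 0..6. -/
def S₅ : Matrix (Fin 5) (Fin 7) ℝ :=
  !![1, 0, -1, -1, 0, 0, 0;
     0, 0, 1, -1, -1, 0, 0;
     0, 1, 0, -1, -1, 0, 0;
     0, 0, 0, 1, 0, -1, 0;
     0, 0, 0, 0, 1, 0, -1]

/-- Input metabolites of each reaction: f_A, f_C have none; 1 has input A;
2 has inputs A,B,C; 3 has inputs B,C; 4 has input D; 5 has input E. -/
def inputs₅ : Fin 7 → Finset (Fin 5) := ![∅, ∅, {0}, {0, 1, 2}, {1, 2}, {3}, {4}]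

/-- A Partial Child Selection J^{∨A}: an injective map assigning to each of
B,C,D,E one of its outgoing reactions. -/
def PCS₅ (P : {m : Fin 5 // m ≠ 0} → Fin 7) : Prop :=
  Function.Injective P ∧ ∀ m, m.1 ∈ inputs₅ (P m)

/-- The matrix S^{J^{∨A} ∪ e_A}: the A-column is e_A, the other columns are the
stoichiometric columns selected by the Partial Child Selection. -/
noncomputable def MatP (P : {m : Fin 5 // m ≠ 0} → Fin 7) : Matrix (Fin 5) (Fin 5) ℝ :=
  Matrix.of fun i m => if h : m = 0 then (if i = 0 then (1 : ℝ) else 0) else S₅ i (P ⟨m, h⟩)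

/-- The symbolic derivative matrix R, with indeterminate entries r_{jm} on input pairs. -/
noncomputable def R₅ :
    Matrix (Fin 7) (Fin 5) (FractionRing (MvPolynomial (Fin 7 × Fin 5) ℝ)) :=
  Matrix.of fun j m =>
    if m ∈ inputs₅ j then
      algebraMap (MvPolynomial (Fin 7 × Fin 5) ℝ) _ (MvPolynomial.X (j, m))
    else 0

/-- The Jacobian matrix SR over the field of rational functions in the r_{jm}. -/
noncomputable def A₅ :
    Matrix (Fin 5) (Fin 5) (FractionRing (MvPolynomial (Fin 7 × Fin 5) ℝ)) :=
  S₅.map (fun x => algebraMap (MvPolynomial (Fin 7 × Fin 5) ℝ) _ (MvPolynomial.C x)) * R₅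

/-!
Rows B and C of `S₅` differ only in the columns `f_C` and `1`, and neither reaction has an input
other than A. So in `SR` and in every `S^{J^{∨A} ∪ e_A}` these two rows agree outside column A:
the latter matrices are singular, and so is the minor of `SR` obtained by deleting row and column
A, which makes the A,A entry of the adjugate, hence of the inverse, vanish. Nondegeneracy: putting
`r_{jm} = 1` on the child selection A ↦ 1, B ↦ 2, C ↦ 3, D ↦ 4, E ↦ 5 and `0` elsewhere
specializes `SR` to `S^J`, whose determinant is `-1`.
-/

open Matrix MvPolynomial

lemma S₅_row_one_eq_row_two {j : Fin 7} {m : Fin 5} (hm : m ≠ 0) (hj : m ∈ inputs₅ j) :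
    S₅ 1 j = S₅ 2 j := by
  fin_cases j <;> fin_cases m <;> simp_all [S₅, inputs₅]

lemma MatP_row_one_eq_row_two {P : {m : Fin 5 // m ≠ 0} → Fin 7}
    (hP : ∀ m, m.1 ∈ inputs₅ (P m)) : MatP P 1 = MatP P 2 := by
  funext m
  by_cases hm : m = 0
  · simp [MatP, hm]
  · simpa [MatP, hm] using S₅_row_one_eq_row_two hm (hP ⟨m, hm⟩)

-- The product in `A₅` elaborates through the default `HMul` instance of `CStarMatrix`;
-- this restates it with the product of `Matrix`.
lemma A₅_eq_mul : A₅ = (S₅.map fun x => algebraMap (MvPolynomial (Fin 7 × Fin 5) ℝ)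
    (FractionRing (MvPolynomial (Fin 7 × Fin 5) ℝ)) (C x) : Matrix (Fin 5) (Fin 7) _) * R₅ :=
  rfl

lemma A₅_row_one_eq_row_two {m : Fin 5} (hm : m ≠ 0) : A₅ 1 m = A₅ 2 m := by
  simp only [A₅_eq_mul, mul_apply]
  refine Finset.sum_congr rfl fun j _ => ?_
  by_cases hj : m ∈ inputs₅ j
  · rw [map_apply, map_apply, S₅_row_one_eq_row_two hm hj]
  · simp [R₅, hj]

lemma A₅_adjugate_zero_zero : A₅.adjugate 0 0 = 0 := by
  rw [adjugate_fin_succ_eq_det_submatrix, det_zero_of_row_eq (i := 0) (j := 1) (by decide),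
    mul_zero]
  funext m
  exact A₅_row_one_eq_row_two m.succ_ne_zero

noncomputable def polyR₅ : Matrix (Fin 7) (Fin 5) (MvPolynomial (Fin 7 × Fin 5) ℝ) :=
  of fun j m => if m ∈ inputs₅ j then X (j, m) else 0

noncomputable def polyA₅ : Matrix (Fin 5) (Fin 5) (MvPolynomial (Fin 7 × Fin 5) ℝ) :=
  (S₅.map C : Matrix (Fin 5) (Fin 7) (MvPolynomial (Fin 7 × Fin 5) ℝ)) * polyR₅

lemma A₅_eq_map_polyA₅ :
    A₅ = polyA₅.map (algebraMap _ (FractionRing (MvPolynomial (Fin 7 × Fin 5) ℝ))) := by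
  rw [A₅_eq_mul, polyA₅, Matrix.map_mul, Matrix.map_map]
  congr 1
  ext j m
  by_cases h : m ∈ inputs₅ j <;> simp [R₅, polyR₅, h]

lemma mul_of_ite_eq_submatrix {l m n α : Type*} [Fintype m] [DecidableEq m] [NonAssocSemiring α]
    (S : Matrix l m α) (J : n → m) :
    S * of (fun j k => if j = J k then (1 : α) else 0) = S.submatrix id J := by
  ext i k
  simp [mul_apply]

def childSel₅ : Fin 5 → Fin 7 := ![2, 3, 4, 5, 6]

lemma mem_inputs₅_childSel₅ (m : Fin 5) : m ∈ inputs₅ (childSel₅ m) := by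
  fin_cases m <;> decide

lemma map_eval_polyR₅ :
    polyR₅.map (eval fun p => if p.1 = childSel₅ p.2 then 1 else 0) =
      of fun j m => if j = childSel₅ m then 1 else 0 := by
  ext j m
  by_cases h : j = childSel₅ m
  · subst h
    simp [polyR₅, mem_inputs₅_childSel₅]
  · simp [polyR₅, h, apply_ite]

lemma det_S₅_submatrix_childSel₅ : (S₅.submatrix id childSel₅).det = -1 := by
  simp [det_succ_row_zero, Fin.sum_univ_succ, S₅, childSel₅, Fin.succAbove]

lemma polyA₅_map_eval_childSel₅ :
    polyA₅.map (eval fun p => if p.1 = childSel₅ p.2 then 1 else 0) =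
      S₅.submatrix id childSel₅ := by
  rw [polyA₅, Matrix.map_mul, Matrix.map_map, map_eval_polyR₅, mul_of_ite_eq_submatrix]
  simp [Function.comp_def]

lemma polyA₅_det_ne_zero : polyA₅.det ≠ 0 := by
  intro h
  have h' := congrArg (eval fun p => if p.1 = childSel₅ p.2 then 1 else 0) h
  rw [RingHom.map_det, RingHom.mapMatrix_apply, polyA₅_map_eval_childSel₅,
    det_S₅_submatrix_childSel₅, map_zero] at h'
  norm_num at h'

/-- There exists a nondegenerate network (the one above) in which a
metabolite has zero algebraic self-influence: det(SR) ≠ 0 algebraically, yet every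
Partial Child Selection J^{∨A} yields a singular matrix S^{J^{∨A} ∪ e_A}, and hence
(δx)^A_A = -((SR)⁻¹)^A_A ≡ 0. -/
theorem stmt12 :
    A₅.det ≠ 0 ∧
    (∀ P, PCS₅ P → (MatP P).det = 0) ∧
    -(A₅⁻¹ 0 0) = 0 := by
  refine ⟨?_, fun P hP => det_zero_of_row_eq (by decide) (MatP_row_one_eq_row_two hP.2), ?_⟩
  · rw [A₅_eq_map_polyA₅, ← RingHom.mapMatrix_apply, ← RingHom.map_det]
    exact (map_ne_zero_iff _ (IsFractionRing.injective _ _)).mpr polyA₅_det_ne_zero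
  · rw [inv_def, Matrix.smul_apply, A₅_adjugate_zero_zero, smul_zero, neg_zero]
end

section
/- Transitivity of metabolite influence fails in multimolecular networks: in the 3-metabolite network with stoichiometric columns S¹=(-1,-1,1)ᵀ, S²=(0,-1,0)ᵀ, S³=(0,0,-1)ᵀ over rows (A,B,C) and input sets {A,B} for reaction 1, {B} for 2, {C} for 3, one has B ⇝ A (i.e., (δx)^{B}_{A} ≢ 0) and A ⇝ C ((δx)^{A}_{C} ≢ 0), but B ⇝̸ C ((δx)^{B}_{C} ≡ 0 as a rational function of the r_{jm}). -/
/-!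
Reaction 1 is the only reaction with input A, so every Partial Child Selection for C sends A to
reaction 1 and then, by injectivity, B to reaction 2. In the matrix S^{J ∪ e_B} the column e_B is
then −S², a multiple of another column, so the determinant vanishes identically: B ⇝̸ C.
The two positive influences are witnessed by explicit selections with determinant ±1.
-/

/-- Stoichiometric matrix of the counterexample network: metabolites A,B,C = 0,1,2,
reactions 1,2,3 = 0,1,2; S¹=(-1,-1,1)ᵀ, S²=(0,-1,0)ᵀ, S³=(0,0,-1)ᵀ. -/
def S₃ : Matrix (Fin 3) (Fin 3) ℝ := !![-1, 0, 0; -1, -1, 0; 1, 0, -1]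

/-- Input metabolites of each reaction: {A,B}, {B}, {C}. -/
def inputs₃ : Fin 3 → Finset (Fin 3) := ![{0, 1}, {1}, {2}]

/-- Metabolite influence m* ⇝ m': by the metabolite-response theorem, the response
(δx)^{m*}_{m'} is algebraically nonzero iff some Partial Child Selection J^{∨m'}
satisfies det(S^{J^{∨m'} ∪ e_{m*}}) ≠ 0. -/
def MetInfl (mstar m' : Fin 3) : Prop :=
  ∃ P : {m : Fin 3 // m ≠ m'} → Fin 3,
    Function.Injective P ∧ (∀ m, m.1 ∈ inputs₃ (P m)) ∧
    (Matrix.of (fun i mm => if h : mm = m' then (if i = mstar then (1 : ℝ) else 0)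
        else S₃ i (P ⟨mm, h⟩))).det ≠ 0

theorem Matrix.det_eq_zero_of_col_eq_smul {n R : Type*} [Fintype n] [DecidableEq n] [CommRing R]
    {M : Matrix n n R} {i j : n} (hij : i ≠ j) (c : R) (h : ∀ k, M k j = c * M k i) :
    M.det = 0 := by
  have hM : M = M.updateCol j (c • fun k ↦ M k i) := by
    ext k l
    by_cases hl : l = j
    · subst hl; simp [h]
    · simp [hl]
  rw [hM, Matrix.det_updateCol_smul, Matrix.det_updateCol_eq_zero hij, mul_zero]

theorem zero_mem_inputs₃_iff {j : Fin 3} : 0 ∈ inputs₃ j ↔ j = 0 := by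
  fin_cases j <;> decide

theorem one_mem_inputs₃_iff {j : Fin 3} : 1 ∈ inputs₃ j ↔ j = 0 ∨ j = 1 := by
  fin_cases j <;> decide

theorem childSelection_two_eq {P : {m : Fin 3 // m ≠ 2} → Fin 3} (hinj : Function.Injective P)
    (hmem : ∀ m, m.1 ∈ inputs₃ (P m)) :
    P ⟨0, by decide⟩ = 0 ∧ P ⟨1, by decide⟩ = 1 := by
  have hA : P ⟨0, by decide⟩ = 0 := zero_mem_inputs₃_iff.mp (hmem _)
  have hAB : P ⟨1, by decide⟩ ≠ P ⟨0, by decide⟩ := fun h ↦ absurd (hinj h) (by decide)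
  refine ⟨hA, (one_mem_inputs₃_iff.mp (hmem _)).resolve_left ?_⟩
  rwa [hA] at hAB

theorem metInfl_one_zero : MetInfl 1 0 :=
  ⟨fun m ↦ if m.1 = 1 then 0 else 2, by decide, by decide, by
    simp +decide [Matrix.det_fin_three, S₃]⟩

theorem metInfl_zero_two : MetInfl 0 2 :=
  ⟨fun m ↦ if m.1 = 0 then 0 else 1, by decide, by decide, by
    simp +decide [Matrix.det_fin_three, S₃]⟩

theorem not_metInfl_one_two : ¬MetInfl 1 2 := by
  rintro ⟨P, hinj, hmem, hdet⟩
  obtain ⟨-, hB⟩ := childSelection_two_eq hinj hmem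
  refine hdet (Matrix.det_eq_zero_of_col_eq_smul (i := 1) (j := 2) (by decide) (-1) fun k ↦ ?_)
  fin_cases k <;> simp [hB, S₃]

/-- Transitivity of metabolite influence fails: B ⇝ A and A ⇝ C,
but B ⇝̸ C. -/
theorem stmt15 : MetInfl 1 0 ∧ MetInfl 0 2 ∧ ¬MetInfl 1 2 :=
  ⟨metInfl_one_zero, metInfl_zero_two, not_metInfl_one_two⟩
end

section
/- In the same 3-metabolite counterexample network, B ⇝ A and A ⇝ 3 (the flux of reaction 3 responds to perturbing A), but B ⇝̸ 3: there is no Child Selection J containing reaction 3 with det(S^{J∖3 ∪ e_B}) ≠ 0. -/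
/-- Flux influence m* ⇝ j': by the flux-response theorem, Φ^{m*}_{j'} is
algebraically nonzero iff some Child Selection J containing j' satisfies
det(S^{J∖j' ∪ e_{m*}}) ≠ 0. -/
def FluxInfl (mstar : Fin 3) (j' : Fin 3) : Prop :=
  ∃ J : Fin 3 → Fin 3,
    Function.Injective J ∧ (∀ m, m ∈ inputs₃ (J m)) ∧ j' ∈ Set.range J ∧
    (Matrix.of (fun i m => if J m = j' then (if i = mstar then (1 : ℝ) else 0)
        else S₃ i (J m))).det ≠ 0


/-! Reaction 1 is the only reaction with input A and reaction 3 the only one with input C, so the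
only Child Selection is the identity. Replacing S³ by e_B in it gives a matrix whose columns S² and
e_B are proportional, hence B ⇝̸ 3; witnesses with nonzero determinant give B ⇝ A and A ⇝ 3. -/

theorem childSelection_eq_id {J : Fin 3 → Fin 3} (hJ : Function.Injective J)
    (hin : ∀ m, m ∈ inputs₃ (J m)) : J = id := by
  revert J
  decide

theorem fluxInfl_zero_two : FluxInfl 0 2 := by
  refine ⟨id, Function.injective_id, by decide, ⟨2, rfl⟩, ?_⟩
  simp [Matrix.det_fin_three, S₃]

theorem not_fluxInfl_one_two : ¬FluxInfl 1 2 := by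
  rintro ⟨J, hJ, hin, -, hdet⟩
  obtain rfl := childSelection_eq_id hJ hin
  simp [Matrix.det_fin_three, S₃] at hdet

/-- B ⇝ A and A ⇝ 3 (flux of reaction 3), but B ⇝̸ 3. -/
theorem stmt16 : MetInfl 1 0 ∧ FluxInfl 0 2 ∧ ¬FluxInfl 1 2 :=
  ⟨metInfl_one_zero, fluxInfl_zero_two, not_fluxInfl_one_two⟩
end

section
/- In a monomolecular reaction network (each reaction has at most one input and one output metabolite, each with stoichiometric coefficient 1, with inflows and outflows routed through an auxiliary zero-complex vertex), for a metabolite m* and an element p' (metabolite or reaction), the response of p' to a targeted perturbation of the concentration of m* is algebraically nonzero if and only if p' is reachable from m* via a directed path in the network digraph. -/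
/-!
Write `A = S R` for the Jacobian with generic rates `r_{jm}`. If `m'` is not reachable from
`m*`, the set `U` of metabolites reachable from `m*` is left by no reaction, so `A` is block
triangular with respect to `U`, hence so is `A⁻¹`, and `(A⁻¹)_{m'm*} = 0`.

Conversely `A⁻¹ = adj A / det A` and `adj A` is a polynomial in the rates, so it suffices to
find one specialisation of the rates at which `(adj A)_{m'm*}` is nonzero. Since `det A ≠ 0`,
no nonempty set of metabolites is a trap, so every metabolite `c ≠ m'` can be routed through
one outgoing reaction, following a path from `m*` to `m'` where possible and otherwise
descending a rank towards the zero complex. Give the routed reactions rate `1` and all others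
(in particular those out of `m'`) rate `0`. A left null vector of the specialised `A` with row
`m*` replaced by `e_{m'}` (its determinant is the cofactor) is then constant along routes and
vanishes at `m*`, hence everywhere.

The reaction responses follow from `Φ = R (δx)`: row `j'` of `R` has the single entry
`r_{j'm}` at the input `m` of `j'`.
-/

open scoped Classical

open Matrix Relation Finset

section LinearAlgebra

variable {ι : Type*} [Fintype ι] [DecidableEq ι]

theorem Matrix.inv_apply_eq_zero_of_invariant {K : Type*} [CommRing K] {A : Matrix ι ι K}
    {U : Set ι} (hA : ∀ i c, c ∈ U → i ∉ U → A i c = 0) {i c : ι} (hc : c ∈ U) (hi : i ∉ U) :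
    A⁻¹ i c = 0 := by
  by_cases hdet : IsUnit A.det
  · let _ : Invertible A := A.invertibleOfIsUnitDet hdet
    have hblock : A.BlockTriangular fun k => decide (k ∉ U) := fun i c h => by
      simp only [Bool.lt_iff, decide_eq_false_iff_not, not_not, decide_eq_true_eq] at h
      exact hA i c h.1 h.2
    exact blockTriangular_inv_of_blockTriangular hblock (by simp [hc, hi])
  · rw [nonsing_inv_apply_not_isUnit A hdet, zero_apply]

theorem Matrix.adjugate_map_apply {R S : Type*} [CommRing R] [CommRing S] (f : R →+* S)
    (M : Matrix ι ι R) (i j : ι) : (M.map f).adjugate i j = f (M.adjugate i j) :=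
  (congrFun₂ (f.map_adjugate M) i j).symm

variable {K : Type*} [Field K]

theorem Matrix.det_eq_zero_of_invariant_of_sum_eq_zero {A : Matrix ι ι K} {W : Finset ι}
    (hW : W.Nonempty) (hA : ∀ i c, c ∈ W → i ∉ W → A i c = 0)
    (hsum : ∀ c ∈ W, ∑ i ∈ W, A i c = 0) : A.det = 0 := by
  by_contra hdet
  obtain ⟨c, hc⟩ := hW
  have key : ∑ i ∈ W, (A * A⁻¹) i c = 0 := by
    simp_rw [mul_apply]
    rw [sum_comm]
    refine sum_eq_zero fun k _ => ?_
    by_cases hk : k ∈ W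
    · rw [← sum_mul, hsum k hk, zero_mul]
    · rw [inv_apply_eq_zero_of_invariant (U := W) hA hc hk]
      simp
  rw [mul_nonsing_inv A (isUnit_iff_ne_zero.mpr hdet)] at key
  simp [one_apply, hc] at key

theorem Matrix.adjugate_apply_ne_zero_of_routing {B : Matrix ι ι K} {s t : ι}
    (next : ι → Option ι) (ρ : ι → ℕ)
    (hB : ∀ r c, B r c =
      if c = t then 0 else (if next c = some r then 1 else 0) - if r = c then 1 else 0)
    (hρ : ∀ c d, c ≠ t → next c = some d → d ≠ t → ρ d < ρ c)
    (hpath : ReflTransGen (fun c d => next c = some d) s t) :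
    B.adjugate t s ≠ 0 := by
  rw [adjugate_apply, Ne, ← exists_vecMul_eq_zero_iff]
  rintro ⟨y, hy, hyB⟩
  -- Column `t` forces `y s = 0`; every other column `c` forces `y c = y (next c)`.
  have hys : y s = 0 := by
    simpa [vecMul, dotProduct, updateRow_apply, hB] using congrFun hyB t
  have hnext : ∀ c, c ≠ t → y c = (next c).elim 0 y := by
    intro c hc
    have hsum :
        ∑ x, y x * ((if next c = some x then 1 else 0) - if x = c then 1 else 0) = 0 := by
      refine Eq.trans (sum_congr rfl fun x _ => ?_) (congrFun hyB c)
      by_cases hx : x = s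
      · simp [hx, hys]
      · simp [updateRow_apply, hx, hB, hc]
    cases hd : next c <;>
      simp_all [mul_sub, sub_eq_zero, eq_comm]
  have hyt : y t = 0 := by
    suffices ∀ c, ReflTransGen (fun c d => next c = some d) c t → y c = y t from
      (this s hpath).symm.trans hys
    intro c hct
    induction hct using ReflTransGen.head_induction_on with
    | refl => rfl
    | @head c d hcd _ ih =>
      by_cases hc : c = t
      · rw [hc]
      · rw [hnext c hc, hcd, Option.elim_some, ih]
  refine hy (funext fun c => ?_)
  induction c using (measure ρ).wf.induction with
  | _ c ih =>
  by_cases hc : c = t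
  · rw [hc, hyt, Pi.zero_apply]
  rw [hnext c hc]
  cases hd : next c with
  | none => rfl
  | some d =>
    by_cases hdt : d = t
    · rw [Option.elim_some, hdt, hyt, Pi.zero_apply]
    · exact ih d (hρ c d hc hd hdt)

end LinearAlgebra

theorem Finset.exists_rank_of_forall_exists_exit {α β : Type*} [DecidableEq α]
    (E : α → β → Prop) (out : β → Option α) (T : Finset α)
    (h : ∀ W ⊆ T, W.Nonempty → ∃ c ∈ W, ∃ b, E c b ∧ ∀ d, out b = some d → d ∉ W) :
    ∃ ρ : α → ℕ, ∀ c ∈ T, ∃ b, E c b ∧ ∀ d, out b = some d → d ∈ T → ρ d < ρ c := by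
  induction T using Finset.strongInduction with
  | H T ih =>
  rcases T.eq_empty_or_nonempty with rfl | hT
  · exact ⟨fun _ => 0, by simp⟩
  obtain ⟨c, hc, b, hb, hout⟩ := h T subset_rfl hT
  obtain ⟨ρ, hρ⟩ :=
    ih (T.erase c) (erase_ssubset hc) fun W hW => h W (hW.trans (erase_subset c T))
  refine ⟨fun x => if x = c then 0 else ρ x + 1, fun x hx => ?_⟩
  by_cases hxc : x = c
  · subst hxc
    exact ⟨b, hb, fun d hd hdT => absurd hdT (hout d hd)⟩
  obtain ⟨b', hb', hlt⟩ := hρ x (mem_erase.2 ⟨hxc, hx⟩)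
  refine ⟨b', hb', fun d hd hdT => ?_⟩
  by_cases hdc : d = c
  · simp [hdc, hxc]
  · simpa [hdc, hxc] using hlt d hd (mem_erase.2 ⟨hdc, hdT⟩)

theorem Relation.ReflTransGen.exists_step_not_mem {α : Type*} {r : α → α → Prop} {a b : α}
    {W : Set α} (h : ReflTransGen r a b) (ha : a ∈ W) (hb : b ∉ W) :
    ∃ c ∈ W, ∃ d ∉ W, r c d ∧ ReflTransGen r d b := by
  induction h using ReflTransGen.head_induction_on with
  | refl => exact absurd ha hb
  | @head a c hac hcb ih =>
    by_cases hc : c ∈ W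
    · exact ih hc
    · exact ⟨a, ha, c, hc, hac, hcb⟩

section Network

variable {ι J : Type*} (src tgt : J → Option ι)

def Reacts (u v : ι) : Prop :=
  ∃ j, src j = some u ∧ tgt j = some v

-- A reaction with `tgt j = none` flows into the zero complex and so leaves every set.
def HasNoTrap : Prop :=
  ∀ W : Finset ι, W.Nonempty → ∃ c ∈ W, ∃ j, src j = some c ∧ ∀ d, tgt j = some d → d ∉ W

variable {src tgt}

theorem HasNoTrap.exists_exit_toward (hno : HasNoTrap src tgt) {t : ι} {W : Finset ι}
    (hW : W.Nonempty) (ht : t ∉ W) :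
    ∃ c ∈ W, ∃ j, (src j = some c ∧ (ReflTransGen (Reacts src tgt) c t →
      ∃ d, ReflTransGen (Reacts src tgt) d t ∧ tgt j = some d)) ∧
      ∀ d, tgt j = some d → d ∉ W := by
  by_cases hWt : ∃ w ∈ W, ReflTransGen (Reacts src tgt) w t
  · obtain ⟨w, hw, hwt⟩ := hWt
    obtain ⟨c, hc, d, hd, ⟨j, hjc, hjd⟩, hdt⟩ := hwt.exists_step_not_mem (W := ↑W) hw ht
    refine ⟨c, hc, j, ⟨hjc, fun _ => ⟨d, hdt, hjd⟩⟩, fun d' hd' => ?_⟩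
    rwa [← Option.some_inj.mp (hjd.symm.trans hd')]
  · push Not at hWt
    obtain ⟨c, hc, j, hj, hout⟩ := hno W hW
    exact ⟨c, hc, j, ⟨hj, fun h => absurd h (hWt c hc)⟩, hout⟩

theorem HasNoTrap.exists_routing [Fintype ι] [DecidableEq ι] (hno : HasNoTrap src tgt)
    {s t : ι} (hst : ReflTransGen (Reacts src tgt) s t) :
    ∃ (g : ι → Option J) (ρ : ι → ℕ), g t = none ∧
      (∀ c, c ≠ t → ∃ j, g c = some j ∧ src j = some c) ∧
      (∀ c d, c ≠ t → (g c).bind tgt = some d → d ≠ t → ρ d < ρ c) ∧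
      ReflTransGen (fun c d => (g c).bind tgt = some d) s t := by
  set Q := {c | ReflTransGen (Reacts src tgt) c t}
  -- Exits from `Q` stay in `Q`, so the route from `s ∈ Q` cannot escape before reaching `t`.
  obtain ⟨ρ, hρ⟩ := exists_rank_of_forall_exists_exit
    (fun c j => src j = some c ∧ (c ∈ Q → ∃ d ∈ Q, tgt j = some d)) tgt (univ.erase t)
    fun W hWt hW => hno.exists_exit_toward hW fun ht => by simpa using hWt ht
  choose g hg using hρ
  have hT : ∀ {c}, c ≠ t → c ∈ univ.erase t := fun hc => mem_erase.2 ⟨hc, mem_univ _⟩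
  let route c : Option J := if hc : c = t then none else some (g c (hT hc))
  have hroute : ∀ c (hc : c ≠ t), route c = some (g c (hT hc)) := fun c hc => dif_neg hc
  refine ⟨route, ρ, dif_pos rfl, fun c hc => ⟨_, hroute c hc, (hg c _).1.1⟩,
    fun c d hc hd hdt => ?_, ?_⟩
  · rw [hroute c hc, Option.bind_some] at hd
    exact (hg c _).2 d hd (hT hdt)
  suffices ∀ c ∈ Q, ReflTransGen (fun c d => (route c).bind tgt = some d) c t from this s hst
  intro c
  induction c using (measure ρ).wf.induction with
  | _ c ih =>
  intro hc
  by_cases hct : c = t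
  · rw [hct]
  obtain ⟨d, hdQ, hd⟩ := (hg c (hT hct)).1.2 hc
  have hnext : (route c).bind tgt = some d := by rw [hroute c hct, Option.bind_some, hd]
  by_cases hdt : d = t
  · exact ReflTransGen.single (hdt ▸ hnext)
  · exact ReflTransGen.head hnext (ih d ((hg c _).2 d hd (hT hdt)) hdQ)

variable (src tgt) [DecidableEq ι]

def stoichiometricMatrix (R : Type*) [Ring R] : Matrix ι J R :=
  of fun i j => (if src j = some i then -1 else 0) + if tgt j = some i then 1 else 0

-- `R_{jm} = ∂r_j/∂x_m`, which can only be nonzero when `m` is the input of `j`.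
def rateMatrix {R : Type*} [Zero R] (k : J × ι → R) : Matrix J ι R :=
  of fun j m => if src j = some m then k (j, m) else 0

variable {R : Type*} [CommRing R]

theorem map_stoichiometricMatrix {S : Type*} [Ring S] (f : R →+* S) :
    (stoichiometricMatrix src tgt R).map f = stoichiometricMatrix src tgt S := by
  ext i j
  simp [stoichiometricMatrix, apply_ite f]

theorem map_rateMatrix {S : Type*} [CommRing S] (f : R →+* S) (k : J × ι → R) :
    (rateMatrix src k).map f = rateMatrix src (f ∘ k) := by
  ext j m
  simp [rateMatrix, apply_ite f]

theorem rateMatrix_mul_apply {κ : Type*} [Fintype ι] (k : J × ι → R) (B : Matrix ι κ R)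
    (j : J) (c : κ) :
    (rateMatrix src k * B) j c = (src j).elim 0 fun m => k (j, m) * B m c := by
  cases h : src j <;> simp [mul_apply, rateMatrix, h]

variable [Fintype J]

def jacobian (k : J × ι → R) : Matrix ι ι R :=
  stoichiometricMatrix src tgt R * rateMatrix src k

theorem map_jacobian {S : Type*} [CommRing S] (f : R →+* S) (k : J × ι → R) :
    (jacobian src tgt k).map f = jacobian src tgt (f ∘ k) := by
  rw [jacobian, Matrix.map_mul, map_stoichiometricMatrix, map_rateMatrix, jacobian]

theorem jacobian_apply (k : J × ι → R) (i c : ι) :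
    jacobian src tgt k i c =
      ∑ j, if src j = some c then stoichiometricMatrix src tgt R i j * k (j, c) else 0 := by
  simp only [jacobian, mul_apply, rateMatrix, of_apply, mul_ite, mul_zero]

variable {src tgt}

theorem jacobian_apply_eq_zero {k : J × ι → R} {i c : ι} (hic : i ≠ c)
    (h : ¬ Reacts src tgt c i) : jacobian src tgt k i c = 0 := by
  rw [jacobian_apply]
  refine sum_eq_zero fun j _ => ?_
  split_ifs with hj
  · have : tgt j ≠ some i := fun hti => h ⟨j, hj, hti⟩
    simp [stoichiometricMatrix, hj, hic.symm, this]
  · rfl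

theorem sum_jacobian_apply_eq_zero {k : J × ι → R} {W : Finset ι} {c : ι} (hc : c ∈ W)
    (hW : ∀ j, src j = some c → ∃ d ∈ W, tgt j = some d) :
    ∑ i ∈ W, jacobian src tgt k i c = 0 := by
  simp_rw [jacobian_apply]
  rw [sum_comm]
  refine sum_eq_zero fun j _ => ?_
  split_ifs with hj
  · obtain ⟨d, hd, hdj⟩ := hW j hj
    simp [← sum_mul, stoichiometricMatrix, sum_add_distrib, hj, hdj, hc, hd]
  · simp

theorem inv_jacobian_apply_eq_zero [Fintype ι] (k : J × ι → R) {s t : ι}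
    (h : ¬ ReflTransGen (Reacts src tgt) s t) : (jacobian src tgt k)⁻¹ t s = 0 := by
  refine inv_apply_eq_zero_of_invariant (U := {c | ReflTransGen (Reacts src tgt) s c})
    (fun i c hc hi => ?_) ReflTransGen.refl h
  refine jacobian_apply_eq_zero ?_ fun hci => hi (hc.tail hci)
  rintro rfl
  exact hi hc

theorem hasNoTrap_of_det_jacobian_ne_zero [Fintype ι] {K : Type*} [Field K] {k : J × ι → K}
    (h : (jacobian src tgt k).det ≠ 0) : HasNoTrap src tgt := by
  intro W hW
  by_contra! htrap
  refine h (det_eq_zero_of_invariant_of_sum_eq_zero hW (fun i c hc hi => ?_) fun c hc => ?_)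
  · refine jacobian_apply_eq_zero (fun h => hi (h ▸ hc)) fun ⟨j, hj, hji⟩ => hi ?_
    obtain ⟨d, hd, hdW⟩ := htrap c hc j hj
    rwa [Option.some_inj.mp (hji.symm.trans hd)]
  · exact sum_jacobian_apply_eq_zero hc fun j hj => (htrap c hc j hj).imp fun d hd => ⟨hd.2, hd.1⟩

theorem adjugate_jacobian_X_ne_zero [Fintype ι] {K : Type*} [Field K] (hno : HasNoTrap src tgt)
    {s t : ι} (hst : ReflTransGen (Reacts src tgt) s t) :
    (jacobian src tgt (MvPolynomial.X : J × ι → MvPolynomial (J × ι) K)).adjugate t s ≠ 0 := by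
  obtain ⟨g, ρ, hgt, hgc, hρ, hpath⟩ := hno.exists_routing hst
  let k : J × ι → K := fun p => if g p.2 = some p.1 then 1 else 0
  have hB : ∀ r c, jacobian src tgt k r c = if c = t then 0 else
      (if (g c).bind tgt = some r then 1 else 0) - if r = c then 1 else 0 := by
    intro r c
    rw [jacobian_apply]
    by_cases hc : c = t
    · simp [k, hc, hgt]
    obtain ⟨j₀, hj₀, hsrc⟩ := hgc c hc
    rw [sum_eq_single j₀ (fun j _ hj => by simp [k, hj₀, Ne.symm hj]) (by simp)]
    simp only [k, hj₀, hsrc, stoichiometricMatrix, of_apply, Option.some_inj, if_true, mul_one,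
      Option.bind_some]
    rcases eq_or_ne r c with rfl | hrc
    · simp only [if_neg hc, if_true]
      ring
    · simp [hc, hrc, hrc.symm]
  intro h0
  apply adjugate_apply_ne_zero_of_routing _ ρ hB hρ hpath
  have hk : MvPolynomial.eval k ∘ MvPolynomial.X = k := funext fun _ => MvPolynomial.eval_X ..
  rw [← hk, ← map_jacobian, adjugate_map_apply, h0, map_zero]

theorem inv_jacobian_apply_ne_zero [Fintype ι] {K L : Type*} [Field K] [Field L]
    (f : MvPolynomial (J × ι) K →+* L) (hf : Function.Injective f)
    (hdet : (jacobian src tgt (f ∘ MvPolynomial.X)).det ≠ 0) {s t : ι}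
    (hst : ReflTransGen (Reacts src tgt) s t) :
    (jacobian src tgt (f ∘ MvPolynomial.X))⁻¹ t s ≠ 0 := by
  have hadj : (jacobian src tgt (f ∘ MvPolynomial.X)).adjugate t s ≠ 0 := by
    rw [← map_jacobian, adjugate_map_apply]
    exact (map_ne_zero_iff f hf).2
      (adjugate_jacobian_X_ne_zero (hasNoTrap_of_det_jacobian_ne_zero hdet) hst)
  rw [Matrix.inv_def, Matrix.smul_apply, smul_eq_mul, Ring.inverse_eq_inv']
  exact mul_ne_zero (inv_ne_zero hdet) hadj

end Network

theorem stmt17_general (M N : ℕ)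
    (src tgt : Fin N → Option (Fin M))
    (S : Matrix (Fin M) (Fin N) ℝ)
    (hS : ∀ i j, S i j =
      (if src j = some i then (-1 : ℝ) else 0) + (if tgt j = some i then 1 else 0))
    (r : Fin N × Fin M → RatFunField (Fin N × Fin M))
    (hr : ∀ p, r p = algebraMap (MvPolynomial (Fin N × Fin M) ℝ) _ (MvPolynomial.X p))
    (R : Matrix (Fin N) (Fin M) (RatFunField (Fin N × Fin M)))
    (hR : ∀ j m, R j m = if src j = some m then r (j, m) else 0)
    (A : Matrix (Fin M) (Fin M) (RatFunField (Fin N × Fin M)))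
    (hA : A = S.map (fun x =>
      algebraMap (MvPolynomial (Fin N × Fin M) ℝ) _ (MvPolynomial.C x)) * R)
    (hdet : A.det ≠ 0)
    (step : Fin M → Fin M → Prop)
    (hstep : ∀ u v, step u v ↔ ∃ j, src j = some u ∧ tgt j = some v)
    (mstar : Fin M) :
    (∀ m' : Fin M, -(A⁻¹ m' mstar) ≠ 0 ↔ Relation.ReflTransGen step mstar m') ∧
    (∀ j' : Fin N, -((R * A⁻¹) j' mstar) ≠ 0 ↔
      ∃ m, Relation.ReflTransGen step mstar m ∧ src j' = some m) := by
  set φ := algebraMap (MvPolynomial (Fin N × Fin M) ℝ) (RatFunField (Fin N × Fin M))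
  have hS' : S = stoichiometricMatrix src tgt ℝ := Matrix.ext hS
  have hR' : R = rateMatrix src r := Matrix.ext hR
  have hA' : A = jacobian src tgt r := by
    rw [hA, hR', hS']
    exact congrArg (· * _) (map_stoichiometricMatrix src tgt (φ.comp MvPolynomial.C))
  have hr' : r = φ ∘ MvPolynomial.X := funext hr
  have hstep' : step = Reacts src tgt := by
    ext u v
    exact hstep u v
  subst hA' hR' hr' hstep'
  have hφ : Function.Injective φ := IsFractionRing.injective _ _
  have hresp : ∀ m', (jacobian src tgt (φ ∘ MvPolynomial.X))⁻¹ m' mstar ≠ 0 ↔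
      ReflTransGen (Reacts src tgt) mstar m' := fun m' =>
    ⟨not_imp_comm.1 (inv_jacobian_apply_eq_zero _), inv_jacobian_apply_ne_zero φ hφ hdet⟩
  refine ⟨fun m' => neg_ne_zero.trans (hresp m'), fun j' => ?_⟩
  rw [neg_ne_zero, rateMatrix_mul_apply]
  cases hj : src j' with
  | none => simp
  | some m =>
    have hrate : φ (MvPolynomial.X (j', m)) ≠ 0 :=
      (map_ne_zero_iff φ hφ).2 (MvPolynomial.X_ne_zero _)
    simp [hresp, hrate]

/-- In a monomolecular reaction network (each reaction j has at most
one input metabolite `src j` and at most one output metabolite `tgt j`, with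
coefficient 1; `none` plays the role of the zero-complex; no self-loops), the
response of an element p' — a metabolite m' or a reaction j' — to a targeted
perturbation of the concentration of m* is algebraically nonzero iff p' is
reachable from m* by a directed path. -/
theorem stmt17 (M N : ℕ)
    (src tgt : Fin N → Option (Fin M))
    (hnoself : ∀ j, src j ≠ tgt j)
    (S : Matrix (Fin M) (Fin N) ℝ)
    (hS : ∀ i j, S i j =
      (if src j = some i then (-1 : ℝ) else 0) + (if tgt j = some i then 1 else 0))
    (r : Fin N × Fin M → RatFunField (Fin N × Fin M))
    (hr : ∀ p, r p = algebraMap (MvPolynomial (Fin N × Fin M) ℝ) _ (MvPolynomial.X p))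
    (R : Matrix (Fin N) (Fin M) (RatFunField (Fin N × Fin M)))
    (hR : ∀ j m, R j m = if src j = some m then r (j, m) else 0)
    (A : Matrix (Fin M) (Fin M) (RatFunField (Fin N × Fin M)))
    (hA : A = S.map (fun x =>
      algebraMap (MvPolynomial (Fin N × Fin M) ℝ) _ (MvPolynomial.C x)) * R)
    (hdet : A.det ≠ 0)
    (step : Fin M → Fin M → Prop)
    (hstep : ∀ u v, step u v ↔ ∃ j, src j = some u ∧ tgt j = some v)
    (mstar : Fin M) :
    (∀ m' : Fin M, -(A⁻¹ m' mstar) ≠ 0 ↔ Relation.ReflTransGen step mstar m') ∧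
    (∀ j' : Fin N, -((R * A⁻¹) j' mstar) ≠ 0 ↔
      ∃ m, Relation.ReflTransGen step mstar m ∧ src j' = some m) :=
  stmt17_general M N src tgt S hS r hr R hR A hA hdet step hstep mstar
end
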